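/- Let G be a countable group and F ⊆ P(G) a Borel left-invariant lower family of subsets of G. Then the thin-completion τ*(F), viewed as a subset of the Cantor space 2^G, is coanalytic; and for each countable ordinal α, τ^α(F) is Borel in 2^G. -/

import Mathlib

open Pointwise

/-- A family of subsets of `G` is left-invariant if it is closed under left translations. -/
def LeftInvariant {G : Type} [Group G] (F : Set (Set G)) : Prop :=
  ∀ A ∈ F, ∀ x : G, x • A ∈ F

/-- A family of subsets is lower if it is closed under taking subsets. -/
def Lower {G : Type} [Group G] (F : Set (Set G)) : Prop :=
  ∀ A B : Set G, A ⊆ B → B ∈ F → A ∈ F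

/-- `tauOp F = τ(F)` is the family of `F`-thin sets. -/
def tauOp {G : Type} [Group G] (F : Set (Set G)) : Set (Set G) :=
  {A | ∀ x y : G, x ≠ y → x • A ∩ y • A ∈ F}

/-- A family is thin-complete if `τ(F) = F`. -/
def ThinComplete {G : Type} [Group G] (F : Set (Set G)) : Prop := tauOp F = F

/-- The thin-completion `τ*(F)`: the smallest thin-complete family containing `F`;
it equals `τ^{<ω₁}(F)` for countable `G`. -/
def tauStar {G : Type} [Group G] (F : Set (Set G)) : Set (Set G) :=
  ⋂₀ {T : Set (Set G) | F ⊆ T ∧ ThinComplete T}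

/-- The transfinite iterates `τ^α(F)`. -/
noncomputable def tauIter {G : Type} [Group G] (F : Set (Set G)) : Ordinal → Set (Set G) :=
  Ordinal.lt_wf.fix fun α ih =>
    if α = 0 then F
    else {A | ∀ x y : G, x ≠ y → ∃ β, ∃ h : β < α, x • A ∩ y • A ∈ ih β h}

/-!
A set `A` lies in `τ*(F)` iff every branch of the `τ`-tree of `A` is finite, i.e. iff `A` is
barred by `F` for the maps `A ↦ x • A ∩ y • A`, `x ≠ y`. Encoding sets by characteristic
functions, these maps become continuous self-maps of `2^G`. So `τ^α(F)` is obtained from the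
Borel set `F` by countably many continuous preimages, countable unions and countable
intersections when `α` is countable, while the complement of `τ*(F)` is the projection of the
Borel set of pairs (branch, set) along which `F` is never reached.
-/

open MeasureTheory

section Barred

variable {ι X : Type*}

def branchIter (f : ι → X → X) (b : ℕ → ι) (x : X) : ℕ → X
  | 0 => x
  | n + 1 => f (b n) (branchIter f b x n)

lemma branchIter_succ' (f : ι → X → X) (b : ℕ → ι) (x : X) (n : ℕ) :
    branchIter f b x (n + 1) = branchIter f (fun k => b (k + 1)) (f (b 0) x) n := by
  induction n with
  | zero => rfl
  | succ n ih => exact congrArg (f (b (n + 1))) ih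

/-- The tree of finite branches `x, f i₀ x, f i₁ (f i₀ x), …` that avoid `S` is
well-founded; for `f = thinStep` and `S = F` this is the well-foundedness of the `τ`-tree `T_A`. -/
inductive Barred (f : ι → X → X) (S : Set X) : X → Prop
  | mem {x : X} : x ∈ S → Barred f S x
  | step {x : X} : (∀ i, Barred f S (f i x)) → Barred f S x

theorem not_barred_iff {f : ι → X → X} {S : Set X} {x : X} :
    ¬ Barred f S x ↔ ∃ b : ℕ → ι, ∀ n, branchIter f b x n ∉ S := by
  constructor
  · intro hx
    have hnext : ∀ y : {y // ¬ Barred f S y}, ∃ i, ¬ Barred f S (f i y) := fun y => by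
      by_contra! h
      exact y.2 (Barred.step h)
    choose pick hpick using hnext
    let next : {y // ¬ Barred f S y} → {y // ¬ Barred f S y} := fun y => ⟨_, hpick y⟩
    let b : ℕ → ι := fun n => pick (next^[n] ⟨x, hx⟩)
    have hbranch : ∀ n, branchIter f b x n = (next^[n] ⟨x, hx⟩).1 := by
      intro n
      induction n with
      | zero => rfl
      | succ n ih => rw [Function.iterate_succ_apply', branchIter, ih]
    exact ⟨b, fun n hn => (next^[n] ⟨x, hx⟩).2 (hbranch n ▸ Barred.mem hn)⟩
  · rintro ⟨b, hb⟩ hx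
    induction hx generalizing b with
    | mem h => exact hb 0 h
    | step _ ih => exact ih (b 0) _ fun n => branchIter_succ' f b _ n ▸ hb (n + 1)

theorem barred_preimage_iff {Y : Type*} {f : ι → X → X} {f' : ι → Y → Y} {g : Y → X}
    (hg : ∀ i y, g (f' i y) = f i (g y)) {S : Set X} {y : Y} :
    Barred f' (g ⁻¹' S) y ↔ Barred f S (g y) := by
  constructor
  · intro h
    induction h with
    | mem h => exact Barred.mem h
    | step _ ih => exact Barred.step fun i => hg i _ ▸ ih i
  · generalize hx : g y = x
    intro h
    induction h generalizing y with
    | mem h => exact Barred.mem (show g y ∈ S from hx ▸ h)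
    | step _ ih => exact Barred.step fun i => ih i ((hg i y).trans (congrArg (f i) hx))

theorem continuous_branchIter [TopologicalSpace ι] [DiscreteTopology ι] [TopologicalSpace X]
    {f : ι → X → X} (hf : ∀ i, Continuous (f i)) (n : ℕ) :
    Continuous fun z : (ℕ → ι) × X => branchIter f z.1 z.2 n := by
  induction n with
  | zero => exact continuous_snd
  | succ n ih =>
    have hstep : Continuous fun q : ι × X => f q.1 q.2 := continuous_prod_of_discrete_left.mpr hf
    exact hstep.comp (((continuous_apply n).comp continuous_fst).prodMk ih)

theorem analyticSet_setOf_not_barred [Countable ι] [TopologicalSpace X] [PolishSpace X]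
    [MeasurableSpace X] [BorelSpace X] {f : ι → X → X} (hf : ∀ i, Continuous (f i))
    {S : Set X} (hS : MeasurableSet S) : AnalyticSet {x | ¬ Barred f S x} := by
  let _ : TopologicalSpace ι := ⊥
  have : DiscreteTopology ι := ⟨rfl⟩
  have : PolishSpace ι := inferInstance
  borelize ((ℕ → ι) × X)
  let E : Set ((ℕ → ι) × X) := ⋂ n, (fun z => branchIter f z.1 z.2 n) ⁻¹' Sᶜ
  have hE : MeasurableSet E :=
    .iInter fun n => (continuous_branchIter hf n).measurable hS.compl
  have hproj : Prod.snd '' E = {x | ¬ Barred f S x} := by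
    ext x
    simp [E, not_barred_iff]
  exact hproj ▸ hE.analyticSet.image_of_continuous continuous_snd

end Barred

section Thin

variable {G : Type} [Group G]

abbrev DistinctPairs (G : Type) : Type := {p : G × G // p.1 ≠ p.2}

def thinStep (p : DistinctPairs G) (A : Set G) : Set G :=
  p.1.1 • A ∩ p.1.2 • A

def charStep (p : DistinctPairs G) (χ : G → Bool) : G → Bool :=
  fun g => χ (p.1.1⁻¹ * g) && χ (p.1.2⁻¹ * g)

theorem setOf_charStep (p : DistinctPairs G) (χ : G → Bool) :
    {g | charStep p χ g = true} = thinStep p {g | χ g = true} := by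
  ext g
  simp [charStep, thinStep, Set.mem_smul_set_iff_inv_smul_mem]

theorem continuous_charStep (p : DistinctPairs G) : Continuous (charStep p) :=
  continuous_pi fun g =>
    (continuous_of_discreteTopology : Continuous fun q : Bool × Bool => q.1 && q.2).comp
      ((continuous_apply (p.1.1⁻¹ * g)).prodMk (continuous_apply (p.1.2⁻¹ * g)) :
        Continuous fun χ : G → Bool => (χ (p.1.1⁻¹ * g), χ (p.1.2⁻¹ * g)))

theorem thinComplete_setOf_barred {F : Set (Set G)} (hli : LeftInvariant F) (hlo : Lower F) :
    ThinComplete {A | Barred thinStep F A} := by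
  refine Set.Subset.antisymm (fun A hA => Barred.step fun p => hA p.1.1 p.1.2 p.2) ?_
  rintro A (hA | hA) x y hxy
  · exact Barred.mem (hlo _ _ Set.inter_subset_left (hli A hA x))
  · exact hA (⟨(x, y), hxy⟩ : DistinctPairs G)

theorem tauStar_eq_setOf_barred {F : Set (Set G)} (hli : LeftInvariant F) (hlo : Lower F) :
    tauStar F = {A | Barred thinStep F A} := by
  refine Set.Subset.antisymm (Set.sInter_subset_of_mem ?_) fun A hA => ?_
  · exact ⟨fun _ => Barred.mem, thinComplete_setOf_barred hli hlo⟩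
  induction hA with
  | mem h => exact fun T hT => hT.1 h
  | step _ ih =>
    exact fun T hT => hT.2 ▸ fun x y hxy => ih (⟨(x, y), hxy⟩ : DistinctPairs G) T hT

theorem tauIter_zero (F : Set (Set G)) : tauIter F 0 = F := by
  rw [tauIter, WellFounded.fix_eq, if_pos rfl]

theorem tauIter_of_ne_zero (F : Set (Set G)) {α : Ordinal} (hα : α ≠ 0) :
    tauIter F α = {A | ∀ p : DistinctPairs G, ∃ β < α, thinStep p A ∈ tauIter F β} := by
  rw [tauIter, WellFounded.fix_eq, if_neg hα]
  ext A
  exact ⟨fun h p => by simpa [thinStep] using h _ _ p.2,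
    fun h x y hxy => by simpa [thinStep] using h ⟨(x, y), hxy⟩⟩

theorem setOf_mem_tauIter_of_ne_zero (F : Set (Set G)) {α : Ordinal} (hα : α ≠ 0) :
    {χ : G → Bool | {g | χ g = true} ∈ tauIter F α} =
      ⋂ p, ⋃ β : Set.Iio α, charStep p ⁻¹' {χ | {g | χ g = true} ∈ tauIter F β} := by
  ext χ
  simp [tauIter_of_ne_zero F hα, setOf_charStep]

theorem measurableSet_setOf_mem_tauIter [Countable G] {F : Set (Set G)}
    (hF : MeasurableSet {χ : G → Bool | {g | χ g = true} ∈ F}) (α : Ordinal)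
    (hα : α.card ≤ Cardinal.aleph0) :
    MeasurableSet {χ : G → Bool | {g | χ g = true} ∈ tauIter F α} := by
  induction α using WellFoundedLT.induction with
  | _ α ih =>
    rcases eq_or_ne α 0 with rfl | hα0
    · rwa [tauIter_zero]
    have : Countable (Set.Iio α) := by
      rwa [← Cardinal.mk_le_aleph0_iff, Cardinal.mk_Iio_ordinal, Cardinal.lift_le_aleph0]
    rw [setOf_mem_tauIter_of_ne_zero F hα0]
    exact .iInter fun p => .iUnion fun β => (continuous_charStep p).measurable <|
      ih β β.2 ((Ordinal.card_le_card β.2.le).trans hα)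

end Thin

theorem stmt_19 {G : Type} [Group G] [Countable G] (F : Set (Set G))
    (hli : LeftInvariant F) (hlo : Lower F)
    (hB : @MeasurableSet (G → Bool) (borel _) {χ : G → Bool | {g | χ g = true} ∈ F}) :
    (∀ α : Ordinal, α.card ≤ Cardinal.aleph0 →
      @MeasurableSet (G → Bool) (borel _)
        {χ : G → Bool | {g | χ g = true} ∈ tauIter F α}) ∧
    MeasureTheory.AnalyticSet
      ({χ : G → Bool | {g | χ g = true} ∈ tauStar F}ᶜ) := by
  rw [← BorelSpace.measurable_eq] at hB ⊢
  refine ⟨measurableSet_setOf_mem_tauIter hB, ?_⟩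
  have : PolishSpace (G → Bool) := {}
  have hcompl : {χ : G → Bool | {g | χ g = true} ∈ tauStar F}ᶜ =
      {χ | ¬ Barred charStep {χ : G → Bool | {g | χ g = true} ∈ F} χ} := by
    ext χ
    rw [tauStar_eq_setOf_barred hli hlo]
    exact (barred_preimage_iff (g := fun χ : G → Bool => {g | χ g = true})
      setOf_charStep).not.symm
  exact hcompl ▸ analyticSet_setOf_not_barred continuous_charStep hB
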